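/- arXiv:1911.11837 — 2 statements merged into one kernel-verified Lean document; each statement's English description precedes it below -/
import Mathlib

section
/- For finite measures on finite products of compact metric spaces, the face maps d_i (marginalization) and degeneracy maps s_i (Dirac diagonal duplication) satisfy all five simplicial identities: (1) d_i d_j = d_{j-1} d_i for i<j; (2) d_i s_j = s_{j-1} d_i for i<j; (3) d_j s_j = d_{j+1} s_j = id; (4) d_i s_j = s_j d_{i-1} for i>j+1; (5) s_i s_j = s_{j+1} s_i for i ≤ j. -/
/- STATEMENT 1: the face maps d_i (marginalization) and degeneracy maps s_i (Dirac diagonal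
duplication) on finite measures on finite products of compact metric spaces satisfy all
five simplicial identities.  The identities are stated in Fin-indexed form, mirroring the
(co)simplicial identities of Mathlib's `SimplexCategory`:
(1) d_i d_{j.succ} = d_j d_{i.castSucc}            for i ≤ j              (d_i d_j = d_{j-1} d_i, i<j)
(2) d_{i.castSucc} s_{j.succ} = s_j d_i            for i ≤ j.castSucc     (d_i s_j = s_{j-1} d_i, i<j)
(3) d_{j.castSucc} s_j = id = d_{j.succ} s_j
(4) d_{i.succ} s_{j.castSucc} = s_j d_i            for j.castSucc < i     (d_i s_j = s_j d_{i-1}, i>j+1)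
(5) s_{i.castSucc} s_j = s_{j.succ} s_i            for i ≤ j.
Since the index families of the two sides agree only propositionally, equalities of
measures are stated via `HEq`. -/

open MeasureTheory

/-- Face map `d_i`: marginalization omitting the `i`-th factor. -/
noncomputable def face {n : ℕ} {X : Fin (n+1) → Type*} [∀ i, MeasurableSpace (X i)]
    (i : Fin (n+1)) (τ : Measure (∀ k, X k)) : Measure (∀ k : Fin n, X (i.succAbove k)) :=
  τ.map fun x k => x (i.succAbove k)

/-- Degeneracy map `s_i`: pushforward along the diagonal duplication of the `i`-th factor
(equivalently, the Dirac diagonal measure on the two copies of the `i`-th factor). -/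
noncomputable def degen {n : ℕ} {X : Fin n → Type*} [∀ i, MeasurableSpace (X i)]
    (i : Fin n) (τ : Measure (∀ k, X k)) : Measure (∀ k : Fin (n+1), X (i.predAbove k)) :=
  τ.map fun x k => x (i.predAbove k)

section Aux

open SimplexCategory

private lemma fin_dd {n} {i j : Fin (n + 2)} (H : i ≤ j) (k : Fin (n + 1)) :
    j.succ.succAbove (i.succAbove k) = i.castSucc.succAbove (j.succAbove k) := by
  have := congrArg (fun f => SimplexCategory.Hom.toOrderHom f k) (δ_comp_δ H)
  simpa [δ, SimplexCategory.Hom.comp] using this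

private lemma fin_ds_le {n} {i : Fin (n + 2)} {j : Fin (n + 1)} (H : i ≤ j.castSucc)
    (k : Fin (n + 2)) :
    j.succ.predAbove (i.castSucc.succAbove k) = i.succAbove (j.predAbove k) := by
  have := congrArg (fun f => SimplexCategory.Hom.toOrderHom f k) (δ_comp_σ_of_le H)
  simpa [δ, σ, SimplexCategory.Hom.comp] using this

private lemma fin_ds_self {n} {j : Fin (n + 1)} (k : Fin (n + 1)) :
    j.predAbove (j.castSucc.succAbove k) = k := by
  have := congrArg (fun f => SimplexCategory.Hom.toOrderHom f k)
    (δ_comp_σ_self (i := j))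
  simpa [δ, σ, SimplexCategory.Hom.comp] using this

private lemma fin_ds_succ {n} {j : Fin (n + 1)} (k : Fin (n + 1)) :
    j.predAbove (j.succ.succAbove k) = k := by
  have := congrArg (fun f => SimplexCategory.Hom.toOrderHom f k)
    (δ_comp_σ_succ (i := j))
  simpa [δ, σ, SimplexCategory.Hom.comp] using this

private lemma fin_ds_gt {n} {i : Fin (n + 2)} {j : Fin (n + 1)} (H : j.castSucc < i)
    (k : Fin (n + 2)) :
    j.castSucc.predAbove (i.succ.succAbove k) = i.succAbove (j.predAbove k) := by
  have := congrArg (fun f => SimplexCategory.Hom.toOrderHom f k) (δ_comp_σ_of_gt H)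
  simpa [δ, σ, SimplexCategory.Hom.comp] using this

private lemma fin_ss {n} {i j : Fin (n + 1)} (H : i ≤ j) (k : Fin (n + 3)) :
    j.predAbove (i.castSucc.predAbove k) = i.predAbove (j.succ.predAbove k) := by
  have := congrArg (fun f => SimplexCategory.Hom.toOrderHom f k) (σ_comp_σ H)
  simpa [σ, SimplexCategory.Hom.comp] using this

private lemma fin_dd' {n} {i j : Fin (n + 1)} (H : i ≤ j) (k : Fin n) :
    j.succ.succAbove (i.succAbove k) = i.castSucc.succAbove (j.succAbove k) := by
  match n, i, j, k with
  | n + 1, i, j, k => exact fin_dd H k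

end Aux

open MeasureTheory in
private lemma map_map_index {N M m : ℕ} {X : Fin N → Type} [∀ i, MeasurableSpace (X i)]
    (τ : Measure (∀ k, X k)) (f : Fin M → Fin N) (g : Fin m → Fin M) :
    Measure.map (fun (y : ∀ k, X (f k)) k => y (g k)) (τ.map fun x k => x (f k)) =
      τ.map fun x k => x (f (g k)) := by
  rw [Measure.map_map (measurable_pi_lambda _ fun k => measurable_pi_apply _)
    (measurable_pi_lambda _ fun k => measurable_pi_apply _)]
  rfl

open MeasureTheory in
private lemma heq_map {N m : ℕ} {X : Fin N → Type} [∀ i, MeasurableSpace (X i)]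
    (τ : Measure (∀ k, X k)) {f g : Fin m → Fin N} (h : ∀ k, f k = g k) :
    HEq (τ.map fun x k => x (f k)) (τ.map fun x k => x (g k)) := by
  obtain rfl : f = g := funext h
  rfl

open MeasureTheory in
private lemma heq_map_id {N : ℕ} {X : Fin N → Type} [∀ i, MeasurableSpace (X i)]
    (τ : Measure (∀ k, X k)) {f : Fin N → Fin N} (h : ∀ k, f k = k) :
    HEq (τ.map fun x k => x (f k)) τ := by
  obtain rfl : f = fun k => k := funext h
  rw [show (fun (x : ∀ k, X k) k => x k) = id from rfl, Measure.map_id]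


open MeasureTheory in
private lemma heq_map2 {N M M' m : ℕ} {X : Fin N → Type} [∀ i, MeasurableSpace (X i)]
    (τ : Measure (∀ k, X k)) (f : Fin M → Fin N) (g : Fin m → Fin M)
    (f' : Fin M' → Fin N) (g' : Fin m → Fin M') (h : ∀ k, f (g k) = f' (g' k)) :
    HEq (Measure.map (fun (y : ∀ k, X (f k)) k => y (g k)) (τ.map fun x k => x (f k)))
      (Measure.map (fun (y : ∀ k, X (f' k)) k => y (g' k)) (τ.map fun x k => x (f' k))) := by
  rw [map_map_index, map_map_index]
  exact heq_map τ h

open MeasureTheory in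
private lemma heq_map_id2 {N M : ℕ} {X : Fin N → Type} [∀ i, MeasurableSpace (X i)]
    (τ : Measure (∀ k, X k)) (f : Fin M → Fin N) (g : Fin N → Fin M) (h : ∀ k, f (g k) = k) :
    HEq (Measure.map (fun (y : ∀ k, X (f k)) k => y (g k)) (τ.map fun x k => x (f k))) τ := by
  rw [map_map_index]
  exact heq_map_id τ h

theorem simplicial_identities_for_measures :
    -- (1)  d_i ∘ d_j = d_{j-1} ∘ d_i  for i < j
    (∀ (n : ℕ) (X : Fin (n+2) → Type)
      [∀ k, MetricSpace (X k)] [∀ k, CompactSpace (X k)]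
      [∀ k, MeasurableSpace (X k)] [∀ k, BorelSpace (X k)]
      (τ : Measure (∀ k, X k)), IsFiniteMeasure τ →
      ∀ (i j : Fin (n+1)), i ≤ j →
        HEq (face i (face j.succ τ)) (face j (face i.castSucc τ))) ∧
    -- (2)  d_i ∘ s_j = s_{j-1} ∘ d_i  for i < j
    (∀ (n : ℕ) (X : Fin (n+2) → Type)
      [∀ k, MetricSpace (X k)] [∀ k, CompactSpace (X k)]
      [∀ k, MeasurableSpace (X k)] [∀ k, BorelSpace (X k)]
      (τ : Measure (∀ k, X k)), IsFiniteMeasure τ →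
      ∀ (i : Fin (n+2)) (j : Fin (n+1)), i ≤ j.castSucc →
        HEq (face i.castSucc (degen j.succ τ)) (degen j (face i τ))) ∧
    -- (3)  d_j ∘ s_j = d_{j+1} ∘ s_j = id
    (∀ (n : ℕ) (X : Fin (n+1) → Type)
      [∀ k, MetricSpace (X k)] [∀ k, CompactSpace (X k)]
      [∀ k, MeasurableSpace (X k)] [∀ k, BorelSpace (X k)]
      (τ : Measure (∀ k, X k)), IsFiniteMeasure τ →
      ∀ (j : Fin (n+1)),
        HEq (face j.castSucc (degen j τ)) τ ∧ HEq (face j.succ (degen j τ)) τ) ∧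
    -- (4)  d_i ∘ s_j = s_j ∘ d_{i-1}  for i > j+1
    (∀ (n : ℕ) (X : Fin (n+2) → Type)
      [∀ k, MetricSpace (X k)] [∀ k, CompactSpace (X k)]
      [∀ k, MeasurableSpace (X k)] [∀ k, BorelSpace (X k)]
      (τ : Measure (∀ k, X k)), IsFiniteMeasure τ →
      ∀ (i : Fin (n+2)) (j : Fin (n+1)), j.castSucc < i →
        HEq (face i.succ (degen j.castSucc τ)) (degen j (face i τ))) ∧
    -- (5)  s_i ∘ s_j = s_{j+1} ∘ s_i  for i ≤ j
    (∀ (n : ℕ) (X : Fin (n+1) → Type)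
      [∀ k, MetricSpace (X k)] [∀ k, CompactSpace (X k)]
      [∀ k, MeasurableSpace (X k)] [∀ k, BorelSpace (X k)]
      (τ : Measure (∀ k, X k)), IsFiniteMeasure τ →
      ∀ (i j : Fin (n+1)), i ≤ j →
        HEq (degen i.castSucc (degen j τ)) (degen j.succ (degen i τ))) := by
  refine ⟨?_, ?_, ?_, ?_, ?_⟩
  · intro n X _ _ _ _ τ _ i j hij
    exact heq_map2 τ j.succ.succAbove i.succAbove i.castSucc.succAbove j.succAbove
      (fin_dd' hij)
  · intro n X _ _ _ _ τ _ i j hij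
    exact heq_map2 τ j.succ.predAbove i.castSucc.succAbove i.succAbove j.predAbove
      (fin_ds_le hij)
  · intro n X _ _ _ _ τ _ j
    exact ⟨heq_map_id2 τ j.predAbove j.castSucc.succAbove fin_ds_self,
      heq_map_id2 τ j.predAbove j.succ.succAbove fin_ds_succ⟩
  · intro n X _ _ _ _ τ _ i j hij
    exact heq_map2 τ j.castSucc.predAbove i.succ.succAbove i.succAbove j.predAbove
      (fin_ds_gt hij)
  · intro n X _ _ _ _ τ _ i j hij
    exact heq_map2 τ j.predAbove i.castSucc.predAbove i.predAbove j.succ.predAbove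
      (fin_ss hij)
end

section
/- Merged indexing (ordered inclusion–exclusion): given order-preserving injections ι_{01} : 𝐧₀ ↪ 𝐧₀₁ and ι_{02} : 𝐧₀ ↪ 𝐧₀₂ between finite ordinals, set n₀₁₂ = n₀₁ + n₀₂ − n₀; then there exist order-preserving injections μ_{01} : 𝐧₀₁ ↪ 𝐧₀₁₂ and μ_{02} : 𝐧₀₂ ↪ 𝐧₀₁₂ with μ_{01}∘ι_{01} = μ_{02}∘ι_{02}, and such that the images of μ_{01}∘ι_{01}, μ_{01}∘ι_{01}^c, and μ_{02}∘ι_{02}^c are pairwise disjoint and cover 𝐧₀₁₂. -/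
open Finset

private def cnt {m n : ℕ} (f : Fin m → Fin n) (y : ℕ) : ℕ :=
  (univ.filter (fun i => (f i : ℕ) < y)).card

private lemma cnt_mono {m n : ℕ} (f : Fin m → Fin n) {a b : ℕ} (hab : a ≤ b) :
    cnt f a ≤ cnt f b := by
  apply card_le_card
  intro i hi
  simp only [mem_filter, mem_univ, true_and] at hi ⊢
  omega

private lemma cnt_le {m n : ℕ} (f : Fin m → Fin n) (y : ℕ) : cnt f y ≤ m := by
  calc cnt f y ≤ univ.card := card_filter_le _ _
  _ = m := by simp

private lemma card_lt_filter {n : ℕ} (y : ℕ) (hy : y ≤ n) :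
    (univ.filter (fun t : Fin n => (t : ℕ) < y)).card = y := by
  rw [← Finset.card_range y]
  refine card_bij' (fun t _ => (t : ℕ))
    (fun i hi => (⟨i, by simp only [Finset.mem_range] at hi; omega⟩ : Fin n))
    ?_ ?_ ?_ ?_
  · intro t ht
    simp only [mem_filter, mem_univ, true_and, card_range] at ht
    simpa using ht
  · intro i hi
    simp only [mem_filter, mem_univ, true_and, card_range]
    simpa using hi
  · intro t ht; simp
  · intro i hi; simp

private lemma cnt_apply {m n : ℕ} {f : Fin m → Fin n} (hf : StrictMono f) (i : Fin m) :
    cnt f ((f i : ℕ)) = i := by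
  unfold cnt
  have : (univ.filter (fun i' => (f i' : ℕ) < (f i : ℕ)))
      = (univ.filter (fun i' : Fin m => (i' : ℕ) < (i : ℕ))) := by
    apply filter_congr
    intro i' _
    constructor
    · intro h; exact_mod_cast hf.lt_iff_lt.mp (by exact_mod_cast h)
    · intro h; exact_mod_cast hf (by exact_mod_cast h : i' < i)
  rw [this, card_lt_filter _ (by omega)]

private lemma cnt_apply_succ {m n : ℕ} {f : Fin m → Fin n} (hf : StrictMono f) (i : Fin m) :
    cnt f ((f i : ℕ) + 1) = i + 1 := by
  unfold cnt
  have : (univ.filter (fun i' => (f i' : ℕ) < (f i : ℕ) + 1))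
      = (univ.filter (fun i' : Fin m => (i' : ℕ) < (i : ℕ) + 1)) := by
    apply filter_congr
    intro i' _
    constructor
    · intro h
      have : f i' ≤ f i := by omega
      have := hf.le_iff_le.mp this
      omega
    · intro h
      have : i' ≤ i := by omega
      have := hf.le_iff_le.mpr this
      omega
  rw [this, card_lt_filter _ (by omega)]

private lemma cnt_succ_of_not_mem {m n : ℕ} {f : Fin m → Fin n} {t : Fin n}
    (ht : t ∉ Set.range f) : cnt f ((t : ℕ) + 1) = cnt f (t : ℕ) := by
  unfold cnt
  congr 1
  apply filter_congr
  intro i _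
  have : f i ≠ t := fun h => ht ⟨i, h⟩
  have : (f i : ℕ) ≠ (t : ℕ) := fun h => this (Fin.ext h)
  omega

private lemma cnt_le_iff {m n : ℕ} {f : Fin m → Fin n} (hf : StrictMono f)
    {t : Fin n} {i : Fin m} (hne : f i ≠ t) :
    cnt f (t : ℕ) ≤ (i : ℕ) ↔ (t : ℕ) < (f i : ℕ) := by
  constructor
  · intro h
    by_contra hc
    have hlt : (f i : ℕ) < (t : ℕ) := by
      have : (f i : ℕ) ≠ (t : ℕ) := fun h => hne (Fin.ext h)
      omega
    have := cnt_mono f (show (f i : ℕ) + 1 ≤ (t : ℕ) by omega)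
    rw [cnt_apply_succ hf] at this
    omega
  · intro h
    have := cnt_mono f (le_of_lt h)
    rw [cnt_apply hf] at this
    exact this

private lemma cnt_add_cnt_compl {m m' n : ℕ} {f : Fin m → Fin n} {fc : Fin m' → Fin n}
    (hf : Function.Injective f) (hfc : Function.Injective fc)
    (hr : Set.range fc = (Set.range f)ᶜ) {y : ℕ} (hy : y ≤ n) :
    cnt f y + cnt fc y = y := by
  classical
  set T := univ.filter (fun t : Fin n => (t : ℕ) < y) with hT
  have key : ∀ {p : ℕ} (g : Fin p → Fin n), Function.Injective g →
      (T.filter (fun t => t ∈ Set.range g)).card = cnt g y := by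
    intro p g hg
    rw [show T.filter (fun t => t ∈ Set.range g)
        = (univ.filter (fun i => (g i : ℕ) < y)).image g by
      ext t
      simp only [hT, mem_filter, mem_univ, true_and, mem_image, Set.mem_range, filter_filter]
      constructor
      · rintro ⟨hlt, i, rfl⟩; exact ⟨i, hlt, rfl⟩
      · rintro ⟨i, hlt, rfl⟩; exact ⟨hlt, i, rfl⟩]
    exact card_image_of_injective _ hg
  have h1 := key f hf
  have h2 := key fc hfc
  have hcompl : T.filter (fun t => t ∈ Set.range fc)
      = T.filter (fun t => ¬ t ∈ Set.range f) := by
    apply filter_congr; intro t _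
    simp [hr]
  have hsum := card_filter_add_card_filter_not
    (s := T) (p := fun t => t ∈ Set.range f)
  have hTcard : T.card = y := card_lt_filter y hy
  rw [← h1, ← h2, hcompl, hsum, hTcard]




/- STATEMENT 17: merged indexing (ordered inclusion–exclusion): given order-preserving
injections ι₀₁ : 𝐧₀ ↪ 𝐧₀₁ and ι₀₂ : 𝐧₀ ↪ 𝐧₀₂ between finite ordinals 𝐧 = {0,…,n}
(encoded as strictly monotone maps of `Fin (n+1)`), set n₀₁₂ = n₀₁ + n₀₂ − n₀; then there
exist order-preserving injections μ₀₁ : 𝐧₀₁ ↪ 𝐧₀₁₂ and μ₀₂ : 𝐧₀₂ ↪ 𝐧₀₁₂ with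
μ₀₁∘ι₀₁ = μ₀₂∘ι₀₂, such that the images of μ₀₁∘ι₀₁, μ₀₁∘ι₀₁^c, and μ₀₂∘ι₀₂^c are
pairwise disjoint and cover 𝐧₀₁₂.  Here ι^c denotes the complementary order-preserving
injection enumerating the complement of the image of ι. -/

theorem merged_indexing {n0 n01 n02 : ℕ}
    (ι01 : Fin (n0+1) → Fin (n01+1)) (ι02 : Fin (n0+1) → Fin (n02+1))
    (h01 : StrictMono ι01) (h02 : StrictMono ι02)
    (ι01c : Fin (n01 - n0) → Fin (n01+1)) (h01c : StrictMono ι01c)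
    (hr01 : Set.range ι01c = (Set.range ι01)ᶜ)
    (ι02c : Fin (n02 - n0) → Fin (n02+1)) (h02c : StrictMono ι02c)
    (hr02 : Set.range ι02c = (Set.range ι02)ᶜ) :
    ∃ (μ01 : Fin (n01+1) → Fin (n01 + n02 - n0 + 1))
      (μ02 : Fin (n02+1) → Fin (n01 + n02 - n0 + 1)),
      StrictMono μ01 ∧ StrictMono μ02 ∧
      μ01 ∘ ι01 = μ02 ∘ ι02 ∧
      Disjoint (Set.range (μ01 ∘ ι01)) (Set.range (μ01 ∘ ι01c)) ∧
      Disjoint (Set.range (μ01 ∘ ι01)) (Set.range (μ02 ∘ ι02c)) ∧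
      Disjoint (Set.range (μ01 ∘ ι01c)) (Set.range (μ02 ∘ ι02c)) ∧
      Set.range (μ01 ∘ ι01) ∪ Set.range (μ01 ∘ ι01c) ∪ Set.range (μ02 ∘ ι02c)
        = Set.univ := by
  classical
  have hn1 : n0 ≤ n01 := by
    have := Fintype.card_le_of_injective ι01 h01.injective
    simpa using this
  have hn2 : n0 ≤ n02 := by
    have := Fintype.card_le_of_injective ι02 h02.injective
    simpa using this
  set g : Fin (n01 - n0) → ℕ := fun k => cnt ι01 (ι01c k) with hgdef
  set g' : Fin (n02 - n0) → ℕ := fun j => cnt ι02 (ι02c j) with hg'def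
  set F1 : ℕ → ℕ := fun t => (univ.filter (fun k => g k < t)).card with hF1def
  set G2 : ℕ → ℕ := fun t => (univ.filter (fun j => g' j < t)).card with hG2def
  have hF1le : ∀ t, F1 t ≤ n01 - n0 := fun t => by
    calc F1 t ≤ (univ : Finset (Fin (n01 - n0))).card := card_filter_le _ _
    _ = n01 - n0 := by simp
  have hG2le : ∀ t, G2 t ≤ n02 - n0 := fun t => by
    calc G2 t ≤ (univ : Finset (Fin (n02 - n0))).card := card_filter_le _ _
    _ = n02 - n0 := by simp
  have hF1mono : ∀ {t t'}, t ≤ t' → F1 t ≤ F1 t' := by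
    intro t t' h
    apply card_le_card
    intro k hk
    simp only [mem_filter, mem_univ, true_and] at hk ⊢
    omega
  have hG2mono : ∀ {t t'}, t ≤ t' → G2 t ≤ G2 t' := by
    intro t t' h
    apply card_le_card
    intro j hj
    simp only [mem_filter, mem_univ, true_and] at hj ⊢
    omega
  have hgmono : ∀ {k k' : Fin (n01 - n0)}, k ≤ k' → g k ≤ g k' := by
    intro k k' h
    exact cnt_mono ι01 (by exact_mod_cast h01c.monotone h)
  have hg'mono : ∀ {j j' : Fin (n02 - n0)}, j ≤ j' → g' j ≤ g' j' := by
    intro j j' h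
    exact cnt_mono ι02 (by exact_mod_cast h02c.monotone h)
  -- membership facts
  have hmem01 : ∀ k, ι01c k ∉ Set.range ι01 := by
    intro k hk
    have : ι01c k ∈ Set.range ι01c := ⟨k, rfl⟩
    rw [hr01] at this
    exact this hk
  have hmem02 : ∀ j, ι02c j ∉ Set.range ι02 := by
    intro j hj
    have : ι02c j ∈ Set.range ι02c := ⟨j, rfl⟩
    rw [hr02] at this
    exact this hj
  -- value bounds
  have hb1 : ∀ y : Fin (n01+1), (y : ℕ) + G2 (cnt ι01 ((y : ℕ) + 1)) < n01 + n02 - n0 + 1 := by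
    intro y
    have h1 := hG2le (cnt ι01 ((y : ℕ) + 1))
    have h2 := y.is_lt
    omega
  have hb2 : ∀ z : Fin (n02+1), (z : ℕ) + F1 (cnt ι02 (z : ℕ) + 1) < n01 + n02 - n0 + 1 := by
    intro z
    have h1 := hF1le (cnt ι02 (z : ℕ) + 1)
    have h2 := z.is_lt
    omega
  set μ01 : Fin (n01+1) → Fin (n01 + n02 - n0 + 1) :=
    fun y => ⟨(y : ℕ) + G2 (cnt ι01 ((y : ℕ) + 1)), hb1 y⟩ with hμ01def
  set μ02 : Fin (n02+1) → Fin (n01 + n02 - n0 + 1) :=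
    fun z => ⟨(z : ℕ) + F1 (cnt ι02 (z : ℕ) + 1), hb2 z⟩ with hμ02def
  have hμ01mono : StrictMono μ01 := by
    intro y y' h
    have hv : (y : ℕ) < (y' : ℕ) := h
    have := hG2mono (cnt_mono ι01 (show (y:ℕ)+1 ≤ (y':ℕ)+1 by omega))
    show _ < _
    simp only [hμ01def, Fin.mk_lt_mk]
    omega
  have hμ02mono : StrictMono μ02 := by
    intro z z' h
    have hv : (z : ℕ) < (z' : ℕ) := h
    have := hF1mono (show cnt ι02 (z:ℕ) + 1 ≤ cnt ι02 (z':ℕ) + 1 by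
      have := cnt_mono ι02 (le_of_lt hv)
      omega)
    show _ < _
    simp only [hμ02def, Fin.mk_lt_mk]
    omega
  have hcomp : μ01 ∘ ι01 = μ02 ∘ ι02 := by
    funext i
    apply Fin.ext
    show (ι01 i : ℕ) + G2 (cnt ι01 ((ι01 i : ℕ) + 1))
        = (ι02 i : ℕ) + F1 (cnt ι02 (ι02 i : ℕ) + 1)
    rw [cnt_apply_succ h01, cnt_apply h02]
    have key1 : (ι01 i : ℕ) = (i : ℕ) + cnt ι01c (ι01 i : ℕ) := by
      have := cnt_add_cnt_compl h01.injective h01c.injective hr01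
        (y := (ι01 i : ℕ)) (by have := (ι01 i).is_lt; omega)
      rw [cnt_apply h01] at this
      omega
    have key2 : (ι02 i : ℕ) = (i : ℕ) + cnt ι02c (ι02 i : ℕ) := by
      have := cnt_add_cnt_compl h02.injective h02c.injective hr02
        (y := (ι02 i : ℕ)) (by have := (ι02 i).is_lt; omega)
      rw [cnt_apply h02] at this
      omega
    have keyB1 : cnt ι01c ((ι01 i : ℕ)) = F1 ((i : ℕ) + 1) := by
      show _ = (univ.filter (fun k => g k < (i:ℕ)+1)).card
      unfold cnt
      congr 1
      apply filter_congr
      intro k _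
      have hne : ι01 i ≠ ι01c k := fun h => hmem01 k ⟨i, h⟩
      have := cnt_le_iff h01 (t := ι01c k) (i := i) hne
      constructor
      · intro h
        have := this.mpr h
        simp only [hgdef]
        omega
      · intro h
        simp only [hgdef] at h
        exact this.mp (by omega)
    have keyB2 : cnt ι02c ((ι02 i : ℕ)) = G2 ((i : ℕ) + 1) := by
      show _ = (univ.filter (fun j => g' j < (i:ℕ)+1)).card
      unfold cnt
      congr 1
      apply filter_congr
      intro j _
      have hne : ι02 i ≠ ι02c j := fun h => hmem02 j ⟨i, h⟩
      have := cnt_le_iff h02 (t := ι02c j) (i := i) hne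
      constructor
      · intro h
        have := this.mpr h
        simp only [hg'def]
        omega
      · intro h
        simp only [hg'def] at h
        exact this.mp (by omega)
    rw [keyB1] at key1
    rw [keyB2] at key2
    omega
  -- values on complements
  have hsum01c : ∀ k, (ι01c k : ℕ) = g k + (k : ℕ) := by
    intro k
    have := cnt_add_cnt_compl h01.injective h01c.injective hr01
      (y := (ι01c k : ℕ)) (by have := (ι01c k).is_lt; omega)
    rw [cnt_apply h01c] at this
    simp only [hgdef]
    omega
  have hsum02c : ∀ j, (ι02c j : ℕ) = g' j + (j : ℕ) := by
    intro j
    have := cnt_add_cnt_compl h02.injective h02c.injective hr02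
      (y := (ι02c j : ℕ)) (by have := (ι02c j).is_lt; omega)
    rw [cnt_apply h02c] at this
    simp only [hg'def]
    omega
  have val01c : ∀ k, (μ01 (ι01c k) : ℕ) = g k + (k : ℕ) + G2 (g k) := by
    intro k
    show (ι01c k : ℕ) + G2 (cnt ι01 ((ι01c k : ℕ) + 1)) = _
    rw [cnt_succ_of_not_mem (hmem01 k)]
    have hgk : cnt ι01 ((ι01c k : ℕ)) = g k := by rw [hgdef]
    rw [hgk, hsum01c k]
  have val02c : ∀ j, (μ02 (ι02c j) : ℕ) = g' j + (j : ℕ) + F1 (g' j + 1) := by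
    intro j
    show (ι02c j : ℕ) + F1 (cnt ι02 (ι02c j : ℕ) + 1) = _
    have hgj : cnt ι02 ((ι02c j : ℕ)) = g' j := by rw [hg'def]
    rw [hgj, hsum02c j]
  -- disjointness 3 (the hard one)
  have disj3 : Disjoint (Set.range (μ01 ∘ ι01c)) (Set.range (μ02 ∘ ι02c)) := by
    rw [Set.disjoint_left]
    rintro x ⟨k, rfl⟩ ⟨j, hx⟩
    have heq : (μ01 (ι01c k) : ℕ) = (μ02 (ι02c j) : ℕ) := by
      rw [show μ01 (ι01c k) = μ02 (ι02c j) from hx.symm]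
    rw [val01c k, val02c j] at heq
    rcases le_or_gt (g k) (g' j) with hab | hab
    · have hF : (k : ℕ) + 1 ≤ F1 (g' j + 1) := by
        have hsub : (univ.filter (fun k' : Fin (n01 - n0) => (k' : ℕ) < (k : ℕ) + 1))
            ⊆ (univ.filter (fun k' => g k' < g' j + 1)) := by
          intro k' h
          simp only [mem_filter, mem_univ, true_and] at h ⊢
          have hle : k' ≤ k := by rw [Fin.le_def]; omega
          have := hgmono hle
          omega
        have hc := card_lt_filter (n := n01 - n0) ((k : ℕ) + 1) (by have := k.is_lt; omega)
        have := card_le_card hsub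
        rw [hc] at this
        exact this
      have hG : G2 (g k) ≤ (j : ℕ) := by
        have hsub : (univ.filter (fun j' : Fin (n02 - n0) => g' j' < g k))
            ⊆ (univ.filter (fun j' : Fin (n02 - n0) => (j' : ℕ) < (j : ℕ))) := by
          intro j' h
          simp only [mem_filter, mem_univ, true_and] at h ⊢
          by_contra hc
          have : j ≤ j' := by rw [Fin.le_def]; omega
          have := hg'mono this
          omega
        have hc := card_lt_filter (n := n02 - n0) ((j : ℕ)) (by have := j.is_lt; omega)
        have := card_le_card hsub
        rw [hc] at this
        exact this
      omega
    · have hG : (j : ℕ) + 1 ≤ G2 (g k) := by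
        have hsub : (univ.filter (fun j' : Fin (n02 - n0) => (j' : ℕ) < (j : ℕ) + 1))
            ⊆ (univ.filter (fun j' => g' j' < g k)) := by
          intro j' h
          simp only [mem_filter, mem_univ, true_and] at h ⊢
          have hle : j' ≤ j := by rw [Fin.le_def]; omega
          have := hg'mono hle
          omega
        have hc := card_lt_filter (n := n02 - n0) ((j : ℕ) + 1) (by have := j.is_lt; omega)
        have := card_le_card hsub
        rw [hc] at this
        exact this
      have hF : F1 (g' j + 1) ≤ (k : ℕ) := by
        have hsub : (univ.filter (fun k' : Fin (n01 - n0) => g k' < g' j + 1))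
            ⊆ (univ.filter (fun k' : Fin (n01 - n0) => (k' : ℕ) < (k : ℕ))) := by
          intro k' h
          simp only [mem_filter, mem_univ, true_and] at h ⊢
          by_contra hc
          have : k ≤ k' := by rw [Fin.le_def]; omega
          have := hgmono this
          omega
        have hc := card_lt_filter (n := n01 - n0) ((k : ℕ)) (by have := k.is_lt; omega)
        have := card_le_card hsub
        rw [hc] at this
        exact this
      omega
  have disj1 : Disjoint (Set.range (μ01 ∘ ι01)) (Set.range (μ01 ∘ ι01c)) := by
    rw [Set.disjoint_left]
    rintro x ⟨i, rfl⟩ ⟨k, hx⟩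
    have : ι01c k = ι01 i := hμ01mono.injective hx
    exact hmem01 k ⟨i, this.symm⟩
  have disj2 : Disjoint (Set.range (μ01 ∘ ι01)) (Set.range (μ02 ∘ ι02c)) := by
    rw [Set.disjoint_left]
    rintro x ⟨i, rfl⟩ ⟨j, hx⟩
    have hxi : (μ01 ∘ ι01) i = μ02 (ι02 i) := congrFun hcomp i
    have : ι02c j = ι02 i := hμ02mono.injective (hx.trans hxi)
    exact hmem02 j ⟨i, this.symm⟩
  -- union
  have hA : (↑(univ.image (μ01 ∘ ι01)) : Set (Fin (n01 + n02 - n0 + 1)))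
      = Set.range (μ01 ∘ ι01) := by rw [coe_image, coe_univ, Set.image_univ]
  have hB : (↑(univ.image (μ01 ∘ ι01c)) : Set (Fin (n01 + n02 - n0 + 1)))
      = Set.range (μ01 ∘ ι01c) := by rw [coe_image, coe_univ, Set.image_univ]
  have hC : (↑(univ.image (μ02 ∘ ι02c)) : Set (Fin (n01 + n02 - n0 + 1)))
      = Set.range (μ02 ∘ ι02c) := by rw [coe_image, coe_univ, Set.image_univ]
  set A := univ.image (μ01 ∘ ι01) with hAdef
  set B := univ.image (μ01 ∘ ι01c) with hBdef
  set C := univ.image (μ02 ∘ ι02c) with hCdef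
  have hdAB : Disjoint A B := by
    rw [← Finset.disjoint_coe, hA, hB]; exact disj1
  have hdAC : Disjoint A C := by
    rw [← Finset.disjoint_coe, hA, hC]; exact disj2
  have hdBC : Disjoint B C := by
    rw [← Finset.disjoint_coe, hB, hC]; exact disj3
  have hcardA : A.card = n0 + 1 := by
    rw [hAdef, card_image_of_injective _ (hμ01mono.injective.comp h01.injective)]
    simp
  have hcardB : B.card = n01 - n0 := by
    rw [hBdef, card_image_of_injective _ (hμ01mono.injective.comp h01c.injective)]
    simp
  have hcardC : C.card = n02 - n0 := by
    rw [hCdef, card_image_of_injective _ (hμ02mono.injective.comp h02c.injective)]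
    simp
  have huniv : A ∪ B ∪ C = Finset.univ := by
    apply Finset.eq_univ_of_card
    rw [card_union_of_disjoint (Finset.disjoint_union_left.mpr ⟨hdAC, hdBC⟩),
      card_union_of_disjoint hdAB, hcardA, hcardB, hcardC]
    simp only [Fintype.card_fin]
    omega
  have hfinal : Set.range (μ01 ∘ ι01) ∪ Set.range (μ01 ∘ ι01c) ∪ Set.range (μ02 ∘ ι02c)
      = Set.univ := by
    rw [← hA, ← hB, ← hC, ← Finset.coe_union, ← Finset.coe_union, huniv, Finset.coe_univ]
  exact ⟨μ01, μ02, hμ01mono, hμ02mono, hcomp, disj1, disj2, disj3, hfinal⟩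
end
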